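/- arXiv:2505.20690 — 3 statements merged into one kernel-verified Lean document; each statement's English description precedes it below -/
import Mathlib

section
/- Let T > 0, m ∈ ℕ with m ≥ 1, let (λ_k)_{k∈ℕ} be a sequence of positive real numbers and (α_k)_{k∈ℕ} a sequence of vectors in ℝ^m. If the family of functions (t ↦ α_k·sin(√λ_k t))_{k∈ℕ} is a Riesz sequence in L₂([0,T];ℝ^m) and the family (t ↦ α_k·cos(√λ_k t))_{k∈ℕ} is a Riesz sequence in L₂([0,T];ℝ^m), then the combined family of complex vector exponentials (t ↦ α_k·e^{i√λ_k t})_{k∈ℕ} ∪ (t ↦ α_k·e^{−i√λ_k t})_{k∈ℕ} is a Riesz sequence in L₂([0,2T];ℂ^m). -/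
/-!
Write `F(t) = Σ (p_k e^{iμ_k t} + q_k e^{-iμ_k t}) α_k` and reflect `[0, 2T]` about `T`.
With `p'_k = p_k e^{iμ_k T}` and `q'_k = q_k e^{-iμ_k T}` one finds `F(T ± s) = X(s) ± Y(s)`,
where `X = Σ (p'_k + q'_k) cos(μ_k s) α_k` and `Y = Σ i (p'_k - q'_k) sin(μ_k s) α_k`. By the
parallelogram law `∫₀^{2T} ‖F‖² = 2 (∫₀^T ‖X‖² + ∫₀^T ‖Y‖²)`, and again by the parallelogram law
the coefficients of `X` and `Y` carry twice the energy `Σ (|p_k|² + |q_k|²)`, so the cosine and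
sine Riesz bounds give those of the exponentials with constants multiplied by `4`. Complex
coefficients in the real cosine and sine families are split into real and imaginary parts.
-/

open MeasureTheory

/-- The family `ξ` of `𝕜^m`-valued functions is a Riesz sequence in `L₂([T',T''];𝕜^m)`:
there are constants `0 < c ≤ C` such that
`c·Σ ‖a k‖² ≤ ∫_{T'}^{T''} ‖Σ a k • ξ k t‖² dt ≤ C·Σ ‖a k‖²`
for every finitely supported family of scalars `a`. -/
def IsRieszFamilyOn (𝕜 : Type) [RCLike 𝕜] {ι : Type} {m : ℕ} (T' T'' : ℝ)
    (ξ : ι → ℝ → EuclideanSpace 𝕜 (Fin m)) : Prop :=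
  ∃ c C : ℝ, 0 < c ∧ c ≤ C ∧ ∀ (s : Finset ι) (a : ι → 𝕜),
    c * ∑ k ∈ s, ‖a k‖ ^ 2 ≤ (∫ t in Set.Icc T' T'', ‖∑ k ∈ s, a k • ξ k t‖ ^ 2) ∧
    (∫ t in Set.Icc T' T'', ‖∑ k ∈ s, a k • ξ k t‖ ^ 2) ≤ C * ∑ k ∈ s, ‖a k‖ ^ 2

namespace EuclideanSpace

variable {ι κ : Type*}

def complexify (x : EuclideanSpace ℝ κ) : EuclideanSpace ℂ κ :=
  WithLp.toLp 2 fun j => (x j : ℂ)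

@[simp]
theorem complexify_apply (x : EuclideanSpace ℝ κ) (j : κ) : x.complexify j = (x j : ℂ) := rfl

theorem complexify_smul (r : ℝ) (x : EuclideanSpace ℝ κ) :
    (r • x).complexify = (r : ℂ) • x.complexify := by
  ext j; simp

theorem norm_sq_complexify_add_I_smul [Fintype κ] (x y : EuclideanSpace ℝ κ) :
    ‖x.complexify + Complex.I • y.complexify‖ ^ 2 = ‖x‖ ^ 2 + ‖y‖ ^ 2 := by
  simp only [EuclideanSpace.norm_sq_eq, ← Finset.sum_add_distrib]
  refine Finset.sum_congr rfl fun j _ => ?_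
  simp only [PiLp.add_apply, PiLp.smul_apply, complexify_apply, smul_eq_mul, Complex.sq_norm,
    mul_comm Complex.I, Complex.normSq_add_mul_I, Real.norm_eq_abs, sq_abs]

theorem sum_smul_complexify (s : Finset ι) (b : ι → ℂ) (x : ι → EuclideanSpace ℝ κ) :
    ∑ k ∈ s, b k • (x k).complexify =
      (∑ k ∈ s, (b k).re • x k).complexify + Complex.I • (∑ k ∈ s, (b k).im • x k).complexify := by
  ext j
  simp only [WithLp.ofLp_sum, WithLp.ofLp_smul, Finset.sum_apply, Pi.smul_apply, complexify_apply,
    smul_eq_mul, PiLp.add_apply, Complex.ofReal_sum, Complex.ofReal_mul, PiLp.smul_apply,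
    Finset.mul_sum, ← Finset.sum_add_distrib]
  refine Finset.sum_congr rfl fun k _ => ?_
  conv_lhs => rw [← Complex.re_add_im (b k)]
  ring

end EuclideanSpace

open Complex in
theorem Complex.mul_exp_add_mul_exp_neg_eq_cos_sin (p q : ℂ) (x y : ℝ) :
    p * exp (I * ↑(x + y)) + q * exp (-(I * ↑(x + y))) =
      (p * exp (I * x) + q * exp (-(I * x))) * Real.cos y +
        I * (p * exp (I * x) - q * exp (-(I * x))) * Real.sin y := by
  have hy : exp (I * y) = cos y + sin y * I := by rw [mul_comm, exp_mul_I]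
  have hy' : exp (-(I * y)) = cos y - sin y * I := by
    rw [show -(I * y) = ↑(-y) * I by push_cast; ring, exp_mul_I]
    push_cast [cos_neg, sin_neg]; ring
  push_cast
  rw [mul_add, neg_add, exp_add, exp_add, hy, hy']
  ring

theorem integral_Icc_zero_two_mul_eq_integral_add_sub {g : ℝ → ℝ} (hg : Continuous g) {T : ℝ}
    (hT : 0 ≤ T) :
    ∫ t in Set.Icc 0 (2 * T), g t = ∫ t in Set.Icc 0 T, (g (T + t) + g (T - t)) := by
  simp only [integral_Icc_eq_integral_Ioc, ← intervalIntegral.integral_of_le hT,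
    ← intervalIntegral.integral_of_le (by linarith : (0:ℝ) ≤ 2 * T)]
  rw [intervalIntegral.integral_add (f := fun t => g (T + t)) (g := fun t => g (T - t))
      ((hg.comp (continuous_const_add T)).intervalIntegrable _ _)
      ((hg.comp (continuous_sub_left T)).intervalIntegrable _ _),
    intervalIntegral.integral_comp_add_left, intervalIntegral.integral_comp_sub_left, add_zero,
    sub_zero, sub_self, two_mul, add_comm (∫ x in T..T + T, g x),
    intervalIntegral.integral_add_adjacent_intervals (hg.intervalIntegrable _ _)
      (hg.intervalIntegrable _ _)]

theorem Finset.sum_eq_sum_toLeft_union_toRight {ι M : Type*} [DecidableEq ι] [AddCommMonoid M]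
    (s : Finset (ι ⊕ ι)) {F : ι ⊕ ι → M} (hF : ∀ x ∉ s, F x = 0) :
    ∑ x ∈ s, F x = ∑ k ∈ s.toLeft ∪ s.toRight, (F (Sum.inl k) + F (Sum.inr k)) := by
  rw [Finset.sum_add_distrib, ← Finset.sum_disjSum]
  refine Finset.sum_subset (fun x hx => ?_) fun x _ hx => hF x hx
  rcases x with k | k
  · exact Finset.inl_mem_disjSum.mpr (Finset.mem_union_left _ (Finset.mem_toLeft.mpr hx))
  · exact Finset.inr_mem_disjSum.mpr (Finset.mem_union_right _ (Finset.mem_toRight.mpr hx))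

def RieszBounds (𝕜 : Type) [RCLike 𝕜] {ι : Type} {m : ℕ} (T' T'' : ℝ)
    (ξ : ι → ℝ → EuclideanSpace 𝕜 (Fin m)) (c C : ℝ) : Prop :=
  ∀ (s : Finset ι) (a : ι → 𝕜),
    c * ∑ k ∈ s, ‖a k‖ ^ 2 ≤ (∫ t in Set.Icc T' T'', ‖∑ k ∈ s, a k • ξ k t‖ ^ 2) ∧
    (∫ t in Set.Icc T' T'', ‖∑ k ∈ s, a k • ξ k t‖ ^ 2) ≤ C * ∑ k ∈ s, ‖a k‖ ^ 2

theorem isRieszFamilyOn_iff_exists_rieszBounds {𝕜 : Type} [RCLike 𝕜] {ι : Type} {m : ℕ}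
    {T' T'' : ℝ} {ξ : ι → ℝ → EuclideanSpace 𝕜 (Fin m)} :
    IsRieszFamilyOn 𝕜 T' T'' ξ ↔ ∃ c C, 0 < c ∧ c ≤ C ∧ RieszBounds 𝕜 T' T'' ξ c C :=
  Iff.rfl

namespace RieszBounds

variable {𝕜 : Type} [RCLike 𝕜] {ι : Type} {m : ℕ} {T' T'' c C : ℝ}
  {ξ : ι → ℝ → EuclideanSpace 𝕜 (Fin m)}

theorem mono {c' C' : ℝ} (h : RieszBounds 𝕜 T' T'' ξ c C) (hc : c' ≤ c) (hC : C ≤ C') :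
    RieszBounds 𝕜 T' T'' ξ c' C' := fun s a => by
  have hnonneg : 0 ≤ ∑ k ∈ s, ‖a k‖ ^ 2 := by positivity
  obtain ⟨hlow, hup⟩ := h s a
  exact ⟨(mul_le_mul_of_nonneg_right hc hnonneg).trans hlow,
    hup.trans (mul_le_mul_of_nonneg_right hC hnonneg)⟩

theorem integrableOn (h : RieszBounds 𝕜 T' T'' ξ c C) (hc : 0 < c) (s : Finset ι) (a : ι → 𝕜) :
    IntegrableOn (fun t => ‖∑ k ∈ s, a k • ξ k t‖ ^ 2) (Set.Icc T' T'') := by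
  by_cases hzero : ∀ k ∈ s, a k = 0
  · have hsum (t : ℝ) : ∑ k ∈ s, a k • ξ k t = 0 :=
      Finset.sum_eq_zero fun k hk => by rw [hzero k hk, zero_smul]
    simp [hsum]
  · -- the lower bound makes the integral nonzero, so it is not the junk value of a
    -- non-integrable function
    refine Integrable.of_integral_ne_zero (ne_of_gt (lt_of_lt_of_le ?_ (h s a).1))
    obtain ⟨k, hk, hak⟩ := not_forall₂.mp hzero
    exact mul_pos hc (Finset.sum_pos' (fun _ _ => by positivity) ⟨k, hk, by positivity⟩)

theorem complexify {f : ι → ℝ → EuclideanSpace ℝ (Fin m)} (h : RieszBounds ℝ T' T'' f c C)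
    (hc : 0 < c) : RieszBounds ℂ T' T'' (fun k t => (f k t).complexify) c C := fun s a => by
  have hsplit : ∫ t in Set.Icc T' T'', ‖∑ k ∈ s, a k • (f k t).complexify‖ ^ 2 =
      (∫ t in Set.Icc T' T'', ‖∑ k ∈ s, (a k).re • f k t‖ ^ 2) +
        ∫ t in Set.Icc T' T'', ‖∑ k ∈ s, (a k).im • f k t‖ ^ 2 := by
    simp only [EuclideanSpace.sum_smul_complexify, EuclideanSpace.norm_sq_complexify_add_I_smul]
    exact integral_add (h.integrableOn hc s _) (h.integrableOn hc s _)
  have hcoeff : ∑ k ∈ s, ‖a k‖ ^ 2 = ∑ k ∈ s, ‖(a k).re‖ ^ 2 + ∑ k ∈ s, ‖(a k).im‖ ^ 2 := by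
    rw [← Finset.sum_add_distrib]
    refine Finset.sum_congr rfl fun k _ => ?_
    rw [Complex.sq_norm, Complex.normSq_apply, Real.norm_eq_abs, Real.norm_eq_abs, sq_abs, sq_abs]
    ring
  obtain ⟨hre_low, hre_up⟩ := h s fun k => (a k).re
  obtain ⟨him_low, him_up⟩ := h s fun k => (a k).im
  rw [hsplit, hcoeff, mul_add, mul_add]
  exact ⟨add_le_add hre_low him_low, add_le_add hre_up him_up⟩

end RieszBounds

theorem rieszBounds_sumElim {𝕜 : Type} [RCLike 𝕜] {ι : Type} {m : ℕ} {T' T'' c C : ℝ}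
    {f g : ι → ℝ → EuclideanSpace 𝕜 (Fin m)}
    (h : ∀ (u : Finset ι) (p q : ι → 𝕜),
      c * ∑ k ∈ u, (‖p k‖ ^ 2 + ‖q k‖ ^ 2) ≤
          (∫ t in Set.Icc T' T'', ‖∑ k ∈ u, (p k • f k t + q k • g k t)‖ ^ 2) ∧
        (∫ t in Set.Icc T' T'', ‖∑ k ∈ u, (p k • f k t + q k • g k t)‖ ^ 2) ≤
          C * ∑ k ∈ u, (‖p k‖ ^ 2 + ‖q k‖ ^ 2)) :
    RieszBounds 𝕜 T' T'' (Sum.elim f g) c C := fun s a => by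
  classical
  set b := (s : Set (ι ⊕ ι)).indicator a
  have hab (x) (hx : x ∈ s) : a x = b x := (Set.indicator_of_mem (by exact hx) a).symm
  have hb (x) (hx : x ∉ s) : b x = 0 := Set.indicator_of_notMem hx a
  have hvec (t : ℝ) : ∑ x ∈ s, a x • Sum.elim f g x t =
      ∑ k ∈ s.toLeft ∪ s.toRight, (b (.inl k) • f k t + b (.inr k) • g k t) := by
    calc ∑ x ∈ s, a x • Sum.elim f g x t = ∑ x ∈ s, b x • Sum.elim f g x t :=
          Finset.sum_congr rfl fun x hx => by rw [hab x hx]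
      _ = _ := Finset.sum_eq_sum_toLeft_union_toRight s fun x hx => by rw [hb x hx, zero_smul]
  have hcoeff : ∑ x ∈ s, ‖a x‖ ^ 2 =
      ∑ k ∈ s.toLeft ∪ s.toRight, (‖b (.inl k)‖ ^ 2 + ‖b (.inr k)‖ ^ 2) := by
    calc ∑ x ∈ s, ‖a x‖ ^ 2 = ∑ x ∈ s, ‖b x‖ ^ 2 :=
          Finset.sum_congr rfl fun x hx => by rw [hab x hx]
      _ = _ := Finset.sum_eq_sum_toLeft_union_toRight s fun x hx => by
          rw [hb x hx, norm_zero, zero_pow two_ne_zero]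
  simp only [hvec, hcoeff]
  exact h _ (fun k => b (.inl k)) (fun k => b (.inr k))

open Complex in
theorem RieszBounds.exp_of_cos_sin {ι : Type} {m : ℕ} {T c C : ℝ} (hT : 0 ≤ T) (hc : 0 < c)
    {μ : ι → ℝ} {v : ι → EuclideanSpace ℂ (Fin m)}
    (hcos : RieszBounds ℂ 0 T (fun k t => (Real.cos (μ k * t) : ℂ) • v k) c C)
    (hsin : RieszBounds ℂ 0 T (fun k t => (Real.sin (μ k * t) : ℂ) • v k) c C) :
    RieszBounds ℂ 0 (2 * T)
      (Sum.elim (fun k t => exp (I * ↑(μ k * t)) • v k) fun k t => exp (-(I * ↑(μ k * t))) • v k)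
      (4 * c) (4 * C) := by
  refine rieszBounds_sumElim fun u p q => ?_
  set P : ι → ℂ := fun k => p k * exp (I * ↑(μ k * T)) + q k * exp (-(I * ↑(μ k * T)))
  set Q : ι → ℂ := fun k => I * (p k * exp (I * ↑(μ k * T)) - q k * exp (-(I * ↑(μ k * T))))
  set X : ℝ → EuclideanSpace ℂ (Fin m) := fun t => ∑ k ∈ u, P k • ((Real.cos (μ k * t) : ℂ) • v k)
  set Y : ℝ → EuclideanSpace ℂ (Fin m) := fun t => ∑ k ∈ u, Q k • ((Real.sin (μ k * t) : ℂ) • v k)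
  set F : ℝ → EuclideanSpace ℂ (Fin m) := fun t =>
    ∑ k ∈ u, (p k • exp (I * ↑(μ k * t)) • v k + q k • exp (-(I * ↑(μ k * t))) • v k)
  have hF (y : ℝ) : F (T + y) = X y + Y y := by
    simp only [F, X, Y, ← Finset.sum_add_distrib]
    refine Finset.sum_congr rfl fun k _ => ?_
    simp only [smul_smul, ← add_smul, mul_add, Complex.mul_exp_add_mul_exp_neg_eq_cos_sin]
    rfl
  have hF_reflect (y : ℝ) : F (T - y) = X y - Y y := by
    rw [sub_eq_add_neg, hF]
    simp only [X, Y, mul_neg, Real.cos_neg, Real.sin_neg, ofReal_neg, neg_smul, smul_neg,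
      Finset.sum_neg_distrib, ← sub_eq_add_neg]
  have hint : ∫ t in Set.Icc 0 (2 * T), ‖F t‖ ^ 2 =
      2 * ((∫ t in Set.Icc 0 T, ‖X t‖ ^ 2) + ∫ t in Set.Icc 0 T, ‖Y t‖ ^ 2) := by
    rw [integral_Icc_zero_two_mul_eq_integral_add_sub (by fun_prop) hT]
    simp only [hF, hF_reflect, parallelogram_law_with_norm ℂ]
    rw [integral_const_mul, integral_add (hcos.integrableOn hc u P) (hsin.integrableOn hc u Q)]
  have hcoeff : ∑ k ∈ u, ‖P k‖ ^ 2 + ∑ k ∈ u, ‖Q k‖ ^ 2 = 2 * ∑ k ∈ u, (‖p k‖ ^ 2 + ‖q k‖ ^ 2) := by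
    rw [← Finset.sum_add_distrib, Finset.mul_sum]
    refine Finset.sum_congr rfl fun k _ => ?_
    simp only [P, Q, norm_mul, norm_I, one_mul, parallelogram_law_with_norm ℂ, ← mul_neg,
      ← ofReal_neg, norm_exp_I_mul_ofReal, mul_one]
  obtain ⟨hX_low, hX_up⟩ := hcos u P
  obtain ⟨hY_low, hY_up⟩ := hsin u Q
  have hscale (d : ℝ) : 4 * d * ∑ k ∈ u, (‖p k‖ ^ 2 + ‖q k‖ ^ 2) =
      2 * (d * ∑ k ∈ u, ‖P k‖ ^ 2 + d * ∑ k ∈ u, ‖Q k‖ ^ 2) := by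
    rw [← mul_add, hcoeff]; ring
  change _ ≤ ∫ t in Set.Icc 0 (2 * T), ‖F t‖ ^ 2 ∧ ∫ t in Set.Icc 0 (2 * T), ‖F t‖ ^ 2 ≤ _
  rw [hint, hscale, hscale]
  constructor <;> linarith

theorem exponentials_isRieszFamilyOn_of_sin_cos_general
    (T : ℝ) (hT : 0 < T) (m : ℕ)
    (lam : ℕ → ℝ)
    (α : ℕ → EuclideanSpace ℝ (Fin m))
    (hsin : IsRieszFamilyOn ℝ 0 T
      (fun k => fun t => Real.sin (Real.sqrt (lam k) * t) • α k))
    (hcos : IsRieszFamilyOn ℝ 0 T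
      (fun k => fun t => Real.cos (Real.sqrt (lam k) * t) • α k)) :
    IsRieszFamilyOn ℂ 0 (2 * T)
      (Sum.elim
        (fun k => fun t => Complex.exp (Complex.I * (Real.sqrt (lam k) * t : ℝ)) •
          (WithLp.toLp 2 (fun j => ((α k j : ℝ) : ℂ)) : EuclideanSpace ℂ (Fin m)))
        (fun k => fun t => Complex.exp (-(Complex.I * (Real.sqrt (lam k) * t : ℝ))) •
          (WithLp.toLp 2 (fun j => ((α k j : ℝ) : ℂ)) : EuclideanSpace ℂ (Fin m)))) := by
  obtain ⟨cS, CS, hcS, hcCS, hS⟩ := isRieszFamilyOn_iff_exists_rieszBounds.mp hsin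
  obtain ⟨cC, CC, hcC, -, hC⟩ := isRieszFamilyOn_iff_exists_rieszBounds.mp hcos
  have hc : 0 < min cS cC := lt_min hcS hcC
  have hS' := (hS.mono (min_le_left cS cC) (le_max_left CS CC)).complexify hc
  have hC' := (hC.mono (min_le_right cS cC) (le_max_right CS CC)).complexify hc
  simp only [EuclideanSpace.complexify_smul] at hS' hC'
  have hcC_le : min cS cC ≤ max CS CC := (min_le_left cS cC).trans (hcCS.trans (le_max_left CS CC))
  exact isRieszFamilyOn_iff_exists_rieszBounds.mpr ⟨4 * min cS cC, 4 * max CS CC, by positivity,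
    by linarith, RieszBounds.exp_of_cos_sin (μ := fun k => √(lam k))
      (v := fun k => (α k).complexify) hT.le hc hC' hS'⟩

/-- If the families `(t ↦ sin(√λ_k t) α_k)` and `(t ↦ cos(√λ_k t) α_k)` are Riesz
sequences in `L₂([0,T];ℝ^m)`, then the combined family of complex vector exponentials
`(t ↦ e^{i√λ_k t} α_k) ∪ (t ↦ e^{-i√λ_k t} α_k)` is a Riesz sequence in `L₂([0,2T];ℂ^m)`. -/
theorem exponentials_isRieszFamilyOn_of_sin_cos
    (T : ℝ) (hT : 0 < T) (m : ℕ) (hm : 1 ≤ m)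
    (lam : ℕ → ℝ) (hlam : ∀ k, 0 < lam k)
    (α : ℕ → EuclideanSpace ℝ (Fin m))
    (hsin : IsRieszFamilyOn ℝ 0 T
      (fun k => fun t => Real.sin (Real.sqrt (lam k) * t) • α k))
    (hcos : IsRieszFamilyOn ℝ 0 T
      (fun k => fun t => Real.cos (Real.sqrt (lam k) * t) • α k)) :
    IsRieszFamilyOn ℂ 0 (2 * T)
      (Sum.elim
        (fun k => fun t => Complex.exp (Complex.I * (Real.sqrt (lam k) * t : ℝ)) •
          (WithLp.toLp 2 (fun j => ((α k j : ℝ) : ℂ)) : EuclideanSpace ℂ (Fin m)))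
        (fun k => fun t => Complex.exp (-(Complex.I * (Real.sqrt (lam k) * t : ℝ))) •
          (WithLp.toLp 2 (fun j => ((α k j : ℝ) : ℂ)) : EuclideanSpace ℂ (Fin m)))) :=
  exponentials_isRieszFamilyOn_of_sin_cos_general T hT m lam α hsin hcos
end

section
/- Let T > 0, m ∈ ℕ with m ≥ 1, let (λ_k)_{k∈ℕ} be a sequence of positive real numbers and (α_k)_{k∈ℕ} a sequence of vectors in ℝ^m. If the family (t ↦ α_k·sin(√λ_k t))_{k∈ℕ} is a Riesz sequence in L₂([0,T];ℝ^m) and the family (t ↦ α_k·cos(√λ_k t))_{k∈ℕ} is a Riesz sequence in L₂([0,T];ℝ^m), then the union family (t ↦ α_k·sin(√λ_k t))_{k∈ℕ} ∪ (t ↦ α_k·cos(√λ_k t))_{k∈ℕ} is a Riesz sequence in L₂([−T,T];ℝ^m). -/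
open MeasureTheory

/-! On `[-T, T]` the sine combination `S` is odd and the cosine combination `C` is even, so by
the parallelogram law `‖S t + C t‖² + ‖S (-t) + C (-t)‖² = 2 ‖S t‖² + 2 ‖C t‖²`. Folding the
integral over `[-T, T]` onto `[0, T]` thus gives
`∫_{-T}^{T} ‖S + C‖² = 2 ∫_0^T ‖S‖² + 2 ∫_0^T ‖C‖²`, and the two Riesz inequalities on `[0, T]`
add up to Riesz inequalities for the union on `[-T, T]`, with bounds `2 min(c₁, c₂)` and
`2 max(C₁, C₂)`. -/

theorem integral_Icc_neg_eq_integral_Icc_add_comp_neg {E : Type*} [NormedAddCommGroup E]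
    [NormedSpace ℝ E] {g : ℝ → E} (hg : Continuous g) (T : ℝ) :
    ∫ t in Set.Icc (-T) T, g t = ∫ t in Set.Icc 0 T, (g t + g (-t)) := by
  rcases lt_or_ge T 0 with hT | hT
  · rw [Set.Icc_eq_empty (by linarith), Set.Icc_eq_empty (by linarith)]
    simp
  rw [integral_Icc_eq_integral_Ioc, ← intervalIntegral.integral_of_le (by linarith),
    integral_Icc_eq_integral_Ioc, ← intervalIntegral.integral_of_le hT,
    intervalIntegral.integral_add (hg.intervalIntegrable _ _)
      ((hg.comp' continuous_neg).intervalIntegrable _ _),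
    intervalIntegral.integral_comp_neg, neg_zero, add_comm,
    intervalIntegral.integral_add_adjacent_intervals (hg.intervalIntegrable _ _)
      (hg.intervalIntegrable _ _)]

theorem norm_sq_add_add_norm_sq_neg_add {E : Type*} [NormedAddCommGroup E]
    [InnerProductSpace ℝ E] (x y : E) :
    ‖x + y‖ ^ 2 + ‖-x + y‖ ^ 2 = 2 * ‖x‖ ^ 2 + 2 * ‖y‖ ^ 2 := by
  rw [neg_add_eq_sub, ← norm_neg (y - x), neg_sub, parallelogram_law_with_norm ℝ]
  ring

theorem integral_Icc_norm_sq_odd_add_even {E : Type*} [NormedAddCommGroup E]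
    [InnerProductSpace ℝ E] {f g : ℝ → E} (hf : Continuous f) (hg : Continuous g)
    (hf_odd : ∀ t, f (-t) = -f t) (hg_even : ∀ t, g (-t) = g t) (T : ℝ) :
    ∫ t in Set.Icc (-T) T, ‖f t + g t‖ ^ 2 =
      2 * (∫ t in Set.Icc 0 T, ‖f t‖ ^ 2) + 2 * ∫ t in Set.Icc 0 T, ‖g t‖ ^ 2 := by
  have hcont : Continuous fun t => ‖f t + g t‖ ^ 2 := by fun_prop
  rw [integral_Icc_neg_eq_integral_Icc_add_comp_neg hcont]
  simp only [hf_odd, hg_even, norm_sq_add_add_norm_sq_neg_add]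
  rw [integral_add, integral_const_mul, integral_const_mul] <;>
    exact Continuous.integrableOn_Icc (by fun_prop)

theorem IsRieszFamilyOn.sum_elim_of_integral_eq {𝕜 : Type} [RCLike 𝕜] {ι κ : Type} {m : ℕ}
    {A B T' T'' r : ℝ} {ξ : ι → ℝ → EuclideanSpace 𝕜 (Fin m)}
    {η : κ → ℝ → EuclideanSpace 𝕜 (Fin m)} {ζ : ι ⊕ κ → ℝ → EuclideanSpace 𝕜 (Fin m)}
    (hξ : IsRieszFamilyOn 𝕜 A B ξ) (hη : IsRieszFamilyOn 𝕜 A B η) (hr : 0 < r)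
    (h : ∀ (s : Finset (ι ⊕ κ)) (a : ι ⊕ κ → 𝕜),
      ∫ t in Set.Icc T' T'', ‖∑ k ∈ s, a k • ζ k t‖ ^ 2 =
        r * ((∫ t in Set.Icc A B, ‖∑ k ∈ s.toLeft, a (.inl k) • ξ k t‖ ^ 2) +
          ∫ t in Set.Icc A B, ‖∑ k ∈ s.toRight, a (.inr k) • η k t‖ ^ 2)) :
    IsRieszFamilyOn 𝕜 T' T'' ζ := by
  obtain ⟨c₁, C₁, hc₁, hcC₁, h₁⟩ := hξ
  obtain ⟨c₂, C₂, hc₂, -, h₂⟩ := hη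
  refine ⟨r * min c₁ c₂, r * max C₁ C₂, by positivity,
    mul_le_mul_of_nonneg_left ((min_le_left _ _).trans (hcC₁.trans (le_max_left _ _))) hr.le,
    fun s a => ?_⟩
  obtain ⟨hξ_lower, hξ_upper⟩ := h₁ s.toLeft (fun k => a (.inl k))
  obtain ⟨hη_lower, hη_upper⟩ := h₂ s.toRight (fun k => a (.inr k))
  rw [h, Finset.sum_sum_eq_sum_toLeft_add_sum_toRight]
  constructor
  · rw [mul_assoc]
    gcongr
    calc min c₁ c₂ * (∑ k ∈ s.toLeft, ‖a (.inl k)‖ ^ 2 + ∑ k ∈ s.toRight, ‖a (.inr k)‖ ^ 2)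
        ≤ c₁ * ∑ k ∈ s.toLeft, ‖a (.inl k)‖ ^ 2 + c₂ * ∑ k ∈ s.toRight, ‖a (.inr k)‖ ^ 2 := by
          rw [mul_add]
          gcongr
          exacts [min_le_left _ _, min_le_right _ _]
      _ ≤ _ := add_le_add hξ_lower hη_lower
  · rw [mul_assoc]
    gcongr
    calc _ ≤ C₁ * ∑ k ∈ s.toLeft, ‖a (.inl k)‖ ^ 2 + C₂ * ∑ k ∈ s.toRight, ‖a (.inr k)‖ ^ 2 :=
          add_le_add hξ_upper hη_upper
      _ ≤ max C₁ C₂ * (∑ k ∈ s.toLeft, ‖a (.inl k)‖ ^ 2 + ∑ k ∈ s.toRight, ‖a (.inr k)‖ ^ 2) := by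
          rw [mul_add]
          gcongr
          exacts [le_max_left _ _, le_max_right _ _]

theorem sin_cos_union_isRieszFamilyOn_general
    (T : ℝ) (m : ℕ)
    (lam : ℕ → ℝ)
    (α : ℕ → EuclideanSpace ℝ (Fin m))
    (hsin : IsRieszFamilyOn ℝ 0 T
      (fun k => fun t => Real.sin (Real.sqrt (lam k) * t) • α k))
    (hcos : IsRieszFamilyOn ℝ 0 T
      (fun k => fun t => Real.cos (Real.sqrt (lam k) * t) • α k)) :
    IsRieszFamilyOn ℝ (-T) T
      (Sum.elim
        (fun k => fun t => Real.sin (Real.sqrt (lam k) * t) • α k)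
        (fun k => fun t => Real.cos (Real.sqrt (lam k) * t) • α k)) := by
  refine hsin.sum_elim_of_integral_eq hcos two_pos fun s a => ?_
  simp only [Finset.sum_sum_eq_sum_toLeft_add_sum_toRight, Sum.elim_inl, Sum.elim_inr]
  have hsin_odd (t : ℝ) : ∑ k ∈ s.toLeft, a (.inl k) • Real.sin (Real.sqrt (lam k) * -t) • α k =
      -∑ k ∈ s.toLeft, a (.inl k) • Real.sin (Real.sqrt (lam k) * t) • α k := by
    simp only [mul_neg, Real.sin_neg, neg_smul, smul_neg, Finset.sum_neg_distrib]
  have hcos_even (t : ℝ) :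
      ∑ k ∈ s.toRight, a (.inr k) • Real.cos (Real.sqrt (lam k) * -t) • α k =
        ∑ k ∈ s.toRight, a (.inr k) • Real.cos (Real.sqrt (lam k) * t) • α k := by
    simp only [mul_neg, Real.cos_neg]
  rw [integral_Icc_norm_sq_odd_add_even (by fun_prop) (by fun_prop) hsin_odd hcos_even, mul_add]

/-- If the families `(t ↦ sin(√λ_k t) α_k)` and `(t ↦ cos(√λ_k t) α_k)` are Riesz
sequences in `L₂([0,T];ℝ^m)`, then their union is a Riesz sequence in `L₂([-T,T];ℝ^m)`. -/
theorem sin_cos_union_isRieszFamilyOn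
    (T : ℝ) (hT : 0 < T) (m : ℕ) (hm : 1 ≤ m)
    (lam : ℕ → ℝ) (hlam : ∀ k, 0 < lam k)
    (α : ℕ → EuclideanSpace ℝ (Fin m))
    (hsin : IsRieszFamilyOn ℝ 0 T
      (fun k => fun t => Real.sin (Real.sqrt (lam k) * t) • α k))
    (hcos : IsRieszFamilyOn ℝ 0 T
      (fun k => fun t => Real.cos (Real.sqrt (lam k) * t) • α k)) :
    IsRieszFamilyOn ℝ (-T) T
      (Sum.elim
        (fun k => fun t => Real.sin (Real.sqrt (lam k) * t) • α k)
        (fun k => fun t => Real.cos (Real.sqrt (lam k) * t) • α k)) :=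
  sin_cos_union_isRieszFamilyOn_general T m lam α hsin hcos
end

section
/- Let H be a Hilbert space and let (ξ_k)_{k∈ℕ} be a family in H which is a Bessel family, i.e., there exists B > 0 such that Σ_k |⟨f, ξ_k⟩|² ≤ B·‖f‖² for every f ∈ H. Suppose that the moment problem for (ξ_k) is solvable for all ℓ² data, i.e., for every square-summable sequence (c_k)_{k∈ℕ} there exists f ∈ H with ⟨f, ξ_k⟩ = c_k for all k. Then (ξ_k)_{k∈ℕ} is a Riesz sequence in H. -/
/-!
The analysis operator `T f = (⟪ξ k, f⟫)ₖ` maps `H` boundedly into `ℓ²` by the Bessel bound, and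
onto `ℓ²` by solvability of the moment problem. Its adjoint is the synthesis operator
`a ↦ ∑ aₖ ξₖ`, which is bounded because `T` is, and bounded below because `T` is surjective
(open mapping theorem). These two bounds on finitely supported `a` are the Riesz inequalities.
-/

open scoped InnerProductSpace

/-- A family `ξ` in an inner product space over `𝕜` is a Riesz sequence:
there are constants `0 < c ≤ C` such that
`c·Σ ‖a k‖² ≤ ‖Σ a k • ξ k‖² ≤ C·Σ ‖a k‖²` for every finitely supported family of scalars. -/
def IsRieszSeq (𝕜 : Type*) [RCLike 𝕜] {H ι : Type*} [NormedAddCommGroup H]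
    [InnerProductSpace 𝕜 H] (ξ : ι → H) : Prop :=
  ∃ c C : ℝ, 0 < c ∧ c ≤ C ∧ ∀ (s : Finset ι) (a : ι → 𝕜),
    c * ∑ k ∈ s, ‖a k‖ ^ 2 ≤ ‖∑ k ∈ s, a k • ξ k‖ ^ 2 ∧
    ‖∑ k ∈ s, a k • ξ k‖ ^ 2 ≤ C * ∑ k ∈ s, ‖a k‖ ^ 2

open scoped lp InnerProduct

section

variable {𝕜 ι : Type*} [RCLike 𝕜]

lemma memℓp_two_of_summable_sq {f : ι → 𝕜} (hf : Summable fun i => ‖f i‖ ^ 2) :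
    Memℓp f 2 :=
  memℓp_gen (by simpa using hf)

lemma lp.norm_sq_eq_tsum (f : ℓ²(ι, 𝕜)) : ‖f‖ ^ 2 = ∑' i, ‖f i‖ ^ 2 := by
  simpa using lp.norm_rpow_eq_tsum (p := 2) (by norm_num) f

lemma lp.summable_norm_sq (f : ℓ²(ι, 𝕜)) : Summable fun i => ‖f i‖ ^ 2 := by
  simpa using (lp.memℓp f).summable (p := 2) (by norm_num)

lemma lp.norm_sq_sum_single [DecidableEq ι] (s : Finset ι) (a : ι → 𝕜) :
    ‖∑ i ∈ s, lp.single 2 i (a i)‖ ^ 2 = ∑ i ∈ s, ‖a i‖ ^ 2 := by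
  simpa using lp.norm_sum_single (p := 2) (by norm_num) a s

end

namespace ContinuousLinearMap

variable {𝕜 E F : Type*} [RCLike 𝕜] [NormedAddCommGroup E] [InnerProductSpace 𝕜 E]
  [CompleteSpace E] [NormedAddCommGroup F] [InnerProductSpace 𝕜 F] [CompleteSpace F]

theorem exists_norm_le_mul_norm_adjoint_of_surjective (T : E →L[𝕜] F)
    (hT : Function.Surjective T) : ∃ M > 0, ∀ y, ‖y‖ ≤ M * ‖(T†) y‖ := by
  obtain ⟨M, hM, hpre⟩ := T.exists_preimage_norm_le hT
  refine ⟨M, hM, fun y => ?_⟩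
  obtain ⟨x, rfl, hx⟩ := hpre y
  have key : ‖T x‖ * ‖T x‖ ≤ M * ‖(T†) (T x)‖ * ‖T x‖ :=
    calc ‖T x‖ * ‖T x‖ = RCLike.re ⟪(T†) (T x), x⟫_𝕜 := by
          rw [adjoint_inner_left, inner_self_eq_norm_mul_norm]
      _ ≤ ‖(T†) (T x)‖ * ‖x‖ := re_inner_le_norm _ _
      _ ≤ ‖(T†) (T x)‖ * (M * ‖T x‖) := by gcongr
      _ = M * ‖(T†) (T x)‖ * ‖T x‖ := by ring
  rcases (norm_nonneg (T x)).eq_or_lt with h0 | hpos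
  · rw [← h0]; positivity
  · exact le_of_mul_le_mul_right key hpos

end ContinuousLinearMap

section

variable {𝕜 H ι : Type*} [RCLike 𝕜] [NormedAddCommGroup H] [InnerProductSpace 𝕜 H]

theorem isRieszSeq_of_bounded_below [DecidableEq ι] {ξ : ι → H} (S : ℓ²(ι, 𝕜) →L[𝕜] H)
    (hS : ∀ i c, S (lp.single 2 i c) = c • ξ i) {M : ℝ} (hM : 0 < M)
    (hbelow : ∀ y, ‖y‖ ≤ M * ‖S y‖) : IsRieszSeq 𝕜 ξ := by
  refine ⟨(M ^ 2)⁻¹, max (M ^ 2)⁻¹ (‖S‖ ^ 2), by positivity, le_max_left _ _, fun s a => ?_⟩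
  set y := ∑ i ∈ s, lp.single 2 i (a i)
  have hSy : S y = ∑ i ∈ s, a i • ξ i := by simp only [y, map_sum, hS]
  rw [← hSy, ← lp.norm_sq_sum_single]
  constructor
  · rw [inv_mul_le_iff₀ (by positivity), ← mul_pow]
    exact pow_le_pow_left₀ (norm_nonneg y) (hbelow y) 2
  · calc ‖S y‖ ^ 2 ≤ (‖S‖ * ‖y‖) ^ 2 := pow_le_pow_left₀ (norm_nonneg _) (S.le_opNorm y) 2
      _ = ‖S‖ ^ 2 * ‖y‖ ^ 2 := mul_pow _ _ _
      _ ≤ max (M ^ 2)⁻¹ (‖S‖ ^ 2) * ‖y‖ ^ 2 := by gcongr; exact le_max_right _ _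

variable (ξ : ι → H) {B : ℝ}
  (hξ : ∀ f : H, (Summable fun k => ‖⟪f, ξ k⟫_𝕜‖ ^ 2) ∧ ∑' k, ‖⟪f, ξ k⟫_𝕜‖ ^ 2 ≤ B * ‖f‖ ^ 2)

noncomputable def besselAnalysis : H →L[𝕜] ℓ²(ι, 𝕜) :=
  LinearMap.mkContinuous
    { toFun := fun f => ⟨fun k => ⟪ξ k, f⟫_𝕜,
        memℓp_two_of_summable_sq (by simpa only [norm_inner_symm] using (hξ f).1)⟩
      map_add' := fun f g => lp.ext (funext fun k => inner_add_right _ _ _)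
      map_smul' := fun c f => lp.ext (funext fun k => inner_smul_right _ _ _) }
    √B
    (fun f => by
      rw [← Real.sqrt_sq (norm_nonneg _), ← Real.sqrt_sq (norm_nonneg f),
        ← Real.sqrt_mul' _ (sq_nonneg _)]
      refine Real.sqrt_le_sqrt ?_
      simpa only [lp.norm_sq_eq_tsum, LinearMap.coe_mk, AddHom.coe_mk, norm_inner_symm]
        using (hξ f).2)

@[simp]
lemma besselAnalysis_apply (f : H) (k : ι) : besselAnalysis ξ hξ f k = ⟪ξ k, f⟫_𝕜 := rfl

lemma besselAnalysis_surjective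
    (hmoment : ∀ cs : ι → 𝕜, (Summable fun k => ‖cs k‖ ^ 2) →
      ∃ f : H, ∀ k, ⟪f, ξ k⟫_𝕜 = cs k) :
    Function.Surjective (besselAnalysis ξ hξ) := fun y => by
  obtain ⟨f, hf⟩ := hmoment (fun k => star (y k)) (by simpa using lp.summable_norm_sq y)
  exact ⟨f, lp.ext (funext fun k => by simp [← inner_conj_symm (ξ k), hf])⟩

variable [CompleteSpace H]

lemma adjoint_besselAnalysis_single [DecidableEq ι] (k : ι) (c : 𝕜) :
    ((besselAnalysis ξ hξ)†) (lp.single 2 k c) = c • ξ k :=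
  ext_inner_right 𝕜 fun f => by
    rw [ContinuousLinearMap.adjoint_inner_left, lp.inner_single_left, besselAnalysis_apply,
      inner_smul_left, RCLike.inner_apply']

end

/-- If `(ξ k)` is a Bessel family in a Hilbert space `H` and the moment problem
`⟪f, ξ k⟫ = c_k` is solvable for all `ℓ²` data `(c_k)`, then `(ξ k)` is a Riesz sequence. -/
theorem isRieszSeq_of_bessel_of_moment_solvable
    {𝕜 H : Type*} [RCLike 𝕜] [NormedAddCommGroup H] [InnerProductSpace 𝕜 H]
    [CompleteSpace H] (ξ : ℕ → H)
    (hbessel : ∃ B : ℝ, 0 < B ∧ ∀ f : H,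
      (Summable fun k => ‖⟪f, ξ k⟫_𝕜‖ ^ 2) ∧ ∑' k, ‖⟪f, ξ k⟫_𝕜‖ ^ 2 ≤ B * ‖f‖ ^ 2)
    (hmoment : ∀ cs : ℕ → 𝕜, (Summable fun k => ‖cs k‖ ^ 2) →
      ∃ f : H, ∀ k, ⟪f, ξ k⟫_𝕜 = cs k) :
    IsRieszSeq 𝕜 ξ := by
  obtain ⟨B, -, hξ⟩ := hbessel
  obtain ⟨M, hM, hbelow⟩ := (besselAnalysis ξ hξ).exists_norm_le_mul_norm_adjoint_of_surjective
    (besselAnalysis_surjective ξ hξ hmoment)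
  exact isRieszSeq_of_bounded_below _ (adjoint_besselAnalysis_single ξ hξ) hM hbelow
end
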